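/- arXiv:2407.06905 — 2 statements merged into one kernel-verified Lean document; each statement's English description precedes it below -/
import Mathlib

section
/- There exists a function D₀ : ℝ³ → ℝ with the following properties: D₀ is continuous and radial (D₀(z) depends only on |z|), D₀ is twice continuously differentiable on ℝ³ ∖ {0}, −ΔD₀(z) = 3^{1/4} ((1+|z|²)^{−1/2} − |z|^{−1}) for every z ≠ 0, D₀(z) → 0 as |z| → ∞, and there is a constant C > 0 with |D₀(z)| ≤ C (1+|z|)^{−1} log(2+|z|) for all z ∈ ℝ³. -/
/-!
We look for `D₀(z) = 3^{1/4} ρ(|z|)`. For radial functions `Δu = r⁻² (r² u')'`, so the equation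
integrates once to `r² ρ' = Φ` with `Φ' = r² (r⁻¹ - (1 + r²)^{-1/2})`, i.e.
`Φ(r) = (r² + arsinh r - r √(1 + r²)) / 2`, and once more to
`ρ(r) = (r - √(1 + r²) - arsinh r / r) / 2`, the constant being fixed by `ρ → 0` at infinity.
Since `arsinh r / r → 1`, `ρ` extends continuously to `r = 0`. The bound follows from
`(√(1 + r²) - r)(1 + r) ≤ 1`, `arsinh r / r ≤ 1` and `arsinh r ≤ 2 log (2 + r)`, and it forces
the decay at infinity.
-/

open MeasureTheory Set Filter

noncomputable section

/-- `ℝ³` as a Euclidean space. -/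
abbrev E3 : Type := EuclideanSpace ℝ (Fin 3)

/-- The Laplacian of `f : ℝ³ → ℝ`, as the sum of the second partial derivatives. -/
noncomputable def lap (f : E3 → ℝ) (x : E3) : ℝ :=
  ∑ i : Fin 3,
    fderiv ℝ (fun y => fderiv ℝ f y (EuclideanSpace.single i 1)) x (EuclideanSpace.single i 1)

/-- The standard bubble `w_{μ,ξ}(x) = 3^{1/4} (μ/(μ² + |x−ξ|²))^{1/2}`. -/
noncomputable def bubble (μ : ℝ) (ξ x : E3) : ℝ :=
  (3 : ℝ) ^ ((1 : ℝ)/4) * (μ / (μ ^ 2 + ‖x - ξ‖ ^ 2)) ^ ((1 : ℝ)/2)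

open Real Topology

theorem hasFDerivAt_comp_norm {F : Type*} [NormedAddCommGroup F] [InnerProductSpace ℝ F]
    {ρ : ℝ → ℝ} {ρ' : ℝ} {y : F} (hy : y ≠ 0) (hρ : HasDerivAt ρ ρ' ‖y‖) :
    HasFDerivAt (fun x => ρ ‖x‖) ((ρ' / ‖y‖) • innerSL ℝ y) y := by
  have hnorm := (hasStrictFDerivAt_norm_sq y).hasFDerivAt.sqrt (by positivity)
  simp only [sqrt_sq (norm_nonneg _)] at hnorm
  refine (hρ.comp_hasFDerivAt y hnorm).congr_fderiv ?_
  ext v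
  simp only [smul_apply, coe_innerSL_apply, smul_eq_mul, nsmul_eq_mul, Nat.cast_ofNat]
  field_simp

theorem lap_comp_norm {ρ Φ : ℝ → ℝ} {Φ' : ℝ} {z : E3} (hz : z ≠ 0)
    (hρ : ∀ᶠ r in 𝓝 ‖z‖, HasDerivAt ρ (Φ r / r ^ 2) r) (hΦ : HasDerivAt Φ Φ' ‖z‖) :
    lap (fun y => ρ ‖y‖) z = Φ' / ‖z‖ ^ 2 := by
  have hr : ‖z‖ ≠ 0 := norm_ne_zero_iff.2 hz
  have hψ : HasDerivAt (fun r => Φ r / r ^ 3) (Φ' / ‖z‖ ^ 3 - 3 * Φ ‖z‖ / ‖z‖ ^ 4) ‖z‖ := by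
    refine (hΦ.div (hasDerivAt_pow 3 ‖z‖) (by positivity)).congr_deriv ?_
    norm_num
    field_simp
  have hsecond (i : Fin 3) :
      fderiv ℝ (fun y => fderiv ℝ (fun x => ρ ‖x‖) y (EuclideanSpace.single i 1)) z
        (EuclideanSpace.single i 1)
      = (Φ' / ‖z‖ ^ 3 - 3 * Φ ‖z‖ / ‖z‖ ^ 4) / ‖z‖ * z i ^ 2 + Φ ‖z‖ / ‖z‖ ^ 3 := by
    have hgrad : (fun y => fderiv ℝ (fun x => ρ ‖x‖) y (EuclideanSpace.single i 1))
        =ᶠ[𝓝 z] fun y => Φ ‖y‖ / ‖y‖ ^ 3 * y i := by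
      filter_upwards [isOpen_ne.mem_nhds hz, continuous_norm.continuousAt.eventually hρ]
        with y hy hρy
      rw [(hasFDerivAt_comp_norm hy hρy).fderiv]
      simp only [smul_apply, coe_innerSL_apply, smul_eq_mul,
        EuclideanSpace.inner_single_right, RCLike.conj_to_real, one_mul]
      ring
    have hp : HasFDerivAt (fun y : E3 => y i) (EuclideanSpace.proj (𝕜 := ℝ) i) z :=
      (EuclideanSpace.proj (𝕜 := ℝ) (ι := Fin 3) i).hasFDerivAt
    rw [hgrad.fderiv_eq, ((hasFDerivAt_comp_norm hz hψ).fun_mul hp).fderiv]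
    simp only [add_apply, smul_apply, PiLp.proj_apply,
      PiLp.single_eq_same, coe_innerSL_apply, EuclideanSpace.inner_single_right,
      RCLike.conj_to_real, smul_eq_mul, mul_one, one_mul]
    ring
  simp only [lap, hsecond, Finset.sum_add_distrib, ← Finset.mul_sum,
    ← EuclideanSpace.real_norm_sq_eq, Finset.sum_const, Finset.card_univ, Fintype.card_fin,
    nsmul_eq_mul]
  field_simp
  ring

theorem hasDerivAt_sqrt_one_add_sq (r : ℝ) :
    HasDerivAt (fun t => √(1 + t ^ 2)) (r / √(1 + r ^ 2)) r := by
  refine ((hasDerivAt_pow 2 r).const_add 1).sqrt (by positivity) |>.congr_deriv ?_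
  simp only [Nat.cast_ofNat, Nat.add_one_sub_one, pow_one]
  ring

theorem dslope_arsinh_eventuallyEq {r : ℝ} (hr : r ≠ 0) :
    dslope arsinh 0 =ᶠ[𝓝 r] fun t => arsinh t / t := by
  filter_upwards [dslope_eventuallyEq_slope_of_ne arsinh hr] with t ht
  rw [ht, slope_def_field, arsinh_zero, sub_zero, sub_zero]

theorem arsinh_le_self {r : ℝ} (hr : 0 ≤ r) : arsinh r ≤ r := by
  simpa using arsinh_le_arsinh.2 (self_le_sinh_iff.2 hr)

theorem arsinh_le_two_mul_log_two_add {r : ℝ} (hr : 0 ≤ r) : arsinh r ≤ 2 * log (2 + r) := by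
  have hb : √(1 + r ^ 2) ≤ 1 + r := sqrt_le_iff.2 ⟨by linarith, by nlinarith⟩
  rw [arsinh, two_mul, ← log_mul (by positivity) (by positivity)]
  exact log_le_log (by positivity) (by nlinarith)

theorem sqrt_one_add_sq_sub_self_mul_le {r : ℝ} (hr : 0 ≤ r) :
    (√(1 + r ^ 2) - r) * (1 + r) ≤ 1 := by
  have hb := sq_sqrt (show 0 ≤ 1 + r ^ 2 by positivity)
  have hb1 : 1 ≤ √(1 + r ^ 2) := one_le_sqrt.2 (by nlinarith)
  nlinarith [sqrt_nonneg (1 + r ^ 2)]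

theorem dslope_arsinh_zero_mem_Icc {r : ℝ} (hr : 0 ≤ r) : dslope arsinh 0 r ∈ Icc 0 1 := by
  rcases hr.eq_or_lt with rfl | hr
  · simp [dslope_same, (hasDerivAt_arsinh 0).deriv]
  · rw [(dslope_arsinh_eventuallyEq hr.ne').eq_of_nhds]
    exact ⟨div_nonneg (arsinh_nonneg_iff.2 hr.le) hr.le, (div_le_one hr).2 (arsinh_le_self hr.le)⟩

theorem tendsto_inv_one_add_mul_log_two_add_atTop :
    Tendsto (fun r : ℝ => (1 + r)⁻¹ * log (2 + r)) atTop (𝓝 0) := by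
  refine ((tendsto_pow_log_div_mul_add_atTop 1 (-1) 1 one_ne_zero).comp
    (tendsto_atTop_add_const_left atTop 2 tendsto_id)).congr fun r => ?_
  simp only [Function.comp_apply, id]
  ring_nf

namespace Corrector

/-- `ρ(r) = (r - √(1 + r²) - arsinh r / r) / 2`, where `dslope arsinh 0` is `arsinh r / r`
extended by its limit `1` at `r = 0`. -/
def profile (r : ℝ) : ℝ := (r - √(1 + r ^ 2) - dslope arsinh 0 r) / 2

/-- `r² ρ'(r)`, see `hasDerivAt_profile`. -/
def flux (r : ℝ) : ℝ := (r ^ 2 + arsinh r - r * √(1 + r ^ 2)) / 2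

theorem hasDerivAt_profile {r : ℝ} (hr : r ≠ 0) : HasDerivAt profile (flux r / r ^ 2) r := by
  have h := ((((hasDerivAt_id r).sub (hasDerivAt_sqrt_one_add_sq r)).sub
    ((hasDerivAt_arsinh r).div (hasDerivAt_id r) hr)).div_const 2)
  refine (h.congr_of_eventuallyEq ?_).congr_deriv ?_
  · filter_upwards [dslope_arsinh_eventuallyEq hr] with t ht
    simp [profile, ht]
  · have hb := sq_sqrt (show 0 ≤ 1 + r ^ 2 by positivity)
    simp only [flux, id]
    field_simp
    linear_combination r * hb

theorem hasDerivAt_flux (r : ℝ) : HasDerivAt flux (r - r ^ 2 / √(1 + r ^ 2)) r := by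
  have h := ((((hasDerivAt_id r).pow 2).add (hasDerivAt_arsinh r)).sub
    ((hasDerivAt_id r).mul (hasDerivAt_sqrt_one_add_sq r))).div_const 2
  refine h.congr_deriv ?_
  have hb := sq_sqrt (show 0 ≤ 1 + r ^ 2 by positivity)
  simp only [id]
  field_simp
  linear_combination -hb

theorem continuous_profile : Continuous profile := by
  have hA : Continuous (dslope arsinh 0) := continuous_iff_continuousAt.2 fun r => by
    rcases eq_or_ne r 0 with rfl | hr
    · exact continuousAt_dslope_same.2 differentiable_arsinh.differentiableAt
    · exact (continuousAt_dslope_of_ne hr).2 continuous_arsinh.continuousAt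
  unfold profile
  fun_prop

theorem contDiffAt_profile {n : WithTop ℕ∞} {r : ℝ} (hr : r ≠ 0) : ContDiffAt ℝ n profile r := by
  have h : ContDiffAt ℝ n (fun t => (t - √(1 + t ^ 2) - arsinh t / t) / 2) r :=
    ((contDiffAt_id.sub ((contDiffAt_const.add (contDiffAt_id.pow 2)).sqrt (by positivity))).sub
      (contDiff_arsinh.contDiffAt.div contDiffAt_id hr)).div_const 2
  refine h.congr_of_eventuallyEq ?_
  filter_upwards [dslope_arsinh_eventuallyEq hr] with t ht
  simp [profile, ht]

theorem abs_profile_le {r : ℝ} (hr : 0 ≤ r) :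
    |profile r| ≤ 5 / 2 * (1 + r)⁻¹ * log (2 + r) := by
  obtain ⟨hA0, hA1⟩ := dslope_arsinh_zero_mem_Icc hr
  have hrA : r * dslope arsinh 0 r = arsinh r := by
    simpa using sub_smul_dslope arsinh 0 r
  have hS := sqrt_one_add_sq_sub_self_mul_le hr
  have hSr : r ≤ √(1 + r ^ 2) := le_sqrt_of_sq_le (by linarith)
  have hlog : 1 ≤ 3 / 2 * log (2 + r) := by
    have := log_le_log (by norm_num) (show (2 : ℝ) ≤ 2 + r by linarith)
    linarith [log_two_gt_d9]
  have harsinh := arsinh_le_two_mul_log_two_add hr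
  rw [abs_of_nonpos (by unfold profile; linarith), mul_assoc, inv_mul_eq_div,
    ← mul_div_assoc, le_div_iff₀ (by linarith)]
  unfold profile
  nlinarith

theorem neg_lap_const_mul_profile (c : ℝ) {z : E3} (hz : z ≠ 0) :
    -lap (fun y => c * profile ‖y‖) z = c * ((1 + ‖z‖ ^ 2) ^ (-(1 : ℝ) / 2) - ‖z‖⁻¹) := by
  have hz' : ‖z‖ ≠ 0 := norm_ne_zero_iff.2 hz
  have hρ : ∀ᶠ r in 𝓝 ‖z‖, HasDerivAt (fun r => c * profile r) (c * flux r / r ^ 2) r := by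
    filter_upwards [isOpen_ne.mem_nhds hz'] with r hr
    exact ((hasDerivAt_profile hr).const_mul c).congr_deriv (mul_div_assoc _ _ _).symm
  rw [lap_comp_norm hz hρ ((hasDerivAt_flux _).const_mul c), neg_div,
    rpow_neg (by positivity), ← sqrt_eq_rpow]
  field_simp
  ring

end Corrector

/-- existence of the radial corrector `D₀`: a continuous radial function on ℝ³,
twice continuously differentiable away from the origin, with
`−ΔD₀(z) = 3^{1/4}((1+|z|²)^{−1/2} − |z|^{−1})` for `z ≠ 0`, `D₀(z) → 0` as `|z| → ∞`, and
`|D₀(z)| ≤ C(1+|z|)^{−1} log(2+|z|)` for all `z`. -/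
theorem corrector_exists :
    ∃ D₀ : E3 → ℝ,
      Continuous D₀ ∧
      (∀ z z' : E3, ‖z‖ = ‖z'‖ → D₀ z = D₀ z') ∧
      ContDiffOn ℝ 2 D₀ {(0 : E3)}ᶜ ∧
      (∀ z : E3, z ≠ 0 → -(lap D₀ z) =
        (3 : ℝ) ^ ((1 : ℝ)/4) * (((1 : ℝ) + ‖z‖ ^ 2) ^ (-(1 : ℝ)/2) - ‖z‖⁻¹)) ∧
      Filter.Tendsto D₀ (Filter.cocompact E3) (nhds 0) ∧
      ∃ C > 0, ∀ z : E3, |D₀ z| ≤ C * (1 + ‖z‖)⁻¹ * Real.log (2 + ‖z‖) := by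
  set c : ℝ := (3 : ℝ) ^ ((1 : ℝ) / 4)
  have hbound (z : E3) :
      |c * Corrector.profile ‖z‖| ≤ 5 / 2 * c * (1 + ‖z‖)⁻¹ * log (2 + ‖z‖) := by
    rw [abs_mul, abs_of_pos (by positivity)]
    have := mul_le_mul_of_nonneg_left (Corrector.abs_profile_le (norm_nonneg z))
      (by positivity : 0 ≤ c)
    linarith
  refine ⟨fun z => c * Corrector.profile ‖z‖,
    continuous_const.mul (Corrector.continuous_profile.comp continuous_norm),
    fun _ _ h => by simp only [h], fun z hz => ?_,
    fun _ => Corrector.neg_lap_const_mul_profile c, ?_, 5 / 2 * c, by positivity, hbound⟩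
  · exact (contDiffAt_const.mul ((Corrector.contDiffAt_profile (norm_ne_zero_iff.2 hz)).comp z
      (contDiffAt_norm ℝ hz))).contDiffWithinAt
  · have h := (tendsto_inv_one_add_mul_log_two_add_atTop.comp
      (tendsto_norm_cocompact_atTop (E := E3))).const_mul (5 / 2 * c)
    rw [mul_zero] at h
    exact squeeze_zero_norm (fun z => (hbound z).trans_eq (mul_assoc _ _ _)) h

end
end

section
/- The integral ∫_{ℝ³} [ w_{1,0}(x) (|x|^{−1} − (1+|x|²)^{−1/2}) + (1/2) w_{1,0}(x)⁵ |x| ] dx is finite and strictly positive, where w_{1,0}(x) = 3^{1/4}(1+|x|²)^{−1/2}. -/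
open MeasureTheory Set Filter

noncomputable section

/-!
The integrand is radial, `F(|x|)` with `F(r) = c p (r⁻¹ - p) + ½ (c p)⁵ r`, where
`c = 3^{1/4}` and `p = (1 + r²)^{-1/2}`. Polar coordinates reduce integrability to that of
`r² F(r)` on `(0, ∞)`. Writing `t = r p`, one has `t² + p² = 1`, hence `t (1 - t) ≤ 1 - t ≤ p²`
and `r² F(r) = c t (1 - t) + ½ c⁵ p² t³ ≤ (c + c⁵/2) / (1 + r²)`, which is integrable.
Since `r p < 1`, `F > 0` on `(0, ∞)`, so the integral is positive.
-/

def a2Profile (c r : ℝ) : ℝ :=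
  c * (1 + r ^ 2) ^ (-(1 : ℝ) / 2) * (r⁻¹ - (1 + r ^ 2) ^ (-(1 : ℝ) / 2)) +
    1 / 2 * (c * (1 + r ^ 2) ^ (-(1 : ℝ) / 2)) ^ 5 * r

lemma rpow_neg_half_sq_mul_self {a : ℝ} (ha : 0 < a) : (a ^ (-(1 : ℝ) / 2)) ^ 2 * a = 1 := by
  rw [← Real.rpow_natCast, ← Real.rpow_mul ha.le]
  norm_num [Real.rpow_neg_one, ha.ne']

section Algebra

variable {c p r : ℝ}

lemma mul_lt_one_of_sq_mul_one_add_sq_eq_one (hp : 0 < p) (h : p ^ 2 * (1 + r ^ 2) = 1) :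
    r * p < 1 := by
  nlinarith [mul_pos hp hp]

lemma sq_mul_profile_le_of_sq_mul_one_add_sq_eq_one (hc : 0 ≤ c) (hr : 0 < r) (hp : 0 < p)
    (h : p ^ 2 * (1 + r ^ 2) = 1) :
    r ^ 2 * (c * p * (r⁻¹ - p) + 1 / 2 * (c * p) ^ 5 * r) ≤ (c + c ^ 5 / 2) * p ^ 2 := by
  set t := r * p with ht_def
  have ht0 : 0 ≤ t := by positivity
  have ht1 : t ≤ 1 := (mul_lt_one_of_sq_mul_one_add_sq_eq_one hp h).le
  have hsq : t ^ 2 + p ^ 2 = 1 := by rw [mul_pow]; linarith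
  have expand : r ^ 2 * (c * p * (r⁻¹ - p) + 1 / 2 * (c * p) ^ 5 * r)
      = c * (t * (1 - t)) + c ^ 5 / 2 * p ^ 2 * t ^ 3 := by
    rw [ht_def]; field_simp
  have h1 : t * (1 - t) ≤ p ^ 2 := by nlinarith
  have h2 : t ^ 3 ≤ 1 := pow_le_one₀ ht0 ht1
  rw [expand]
  have := mul_le_mul_of_nonneg_left h1 hc
  have := mul_le_mul_of_nonneg_left h2 (by positivity : 0 ≤ c ^ 5 / 2 * p ^ 2)
  linarith

end Algebra

section Profile

variable {c r : ℝ}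

lemma a2Profile_pos (hc : 0 < c) (hr : 0 < r) : 0 < a2Profile c r := by
  have ha : (0 : ℝ) < 1 + r ^ 2 := by positivity
  set p := (1 + r ^ 2) ^ (-(1 : ℝ) / 2)
  have hp : 0 < p := Real.rpow_pos_of_pos ha _
  have hrp := mul_lt_one_of_sq_mul_one_add_sq_eq_one hp (rpow_neg_half_sq_mul_self ha)
  have hgap : 0 ≤ r⁻¹ - p := by
    rw [sub_nonneg, ← one_div, le_div_iff₀' hr]
    exact hrp.le
  unfold a2Profile
  positivity

lemma sq_mul_a2Profile_le (hc : 0 ≤ c) (hr : 0 < r) :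
    r ^ 2 * a2Profile c r ≤ (c + c ^ 5 / 2) * (1 + r ^ 2)⁻¹ := by
  have ha : (0 : ℝ) < 1 + r ^ 2 := by positivity
  have hp := Real.rpow_pos_of_pos ha (-(1 : ℝ) / 2)
  have hsq := rpow_neg_half_sq_mul_self ha
  have hinv : ((1 + r ^ 2) ^ (-(1 : ℝ) / 2)) ^ 2 = (1 + r ^ 2)⁻¹ := eq_inv_of_mul_eq_one_left hsq
  rw [← hinv]
  exact sq_mul_profile_le_of_sq_mul_one_add_sq_eq_one hc hr hp hsq

lemma integrableOn_sq_mul_a2Profile (hc : 0 < c) :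
    IntegrableOn (fun r => r ^ 2 * a2Profile c r) (Ioi 0) := by
  refine ((integrable_inv_one_add_sq.const_mul (c + c ^ 5 / 2)).integrableOn).mono' ?_ ?_
  · unfold a2Profile
    fun_prop
  · filter_upwards [ae_restrict_mem measurableSet_Ioi] with r (hr : 0 < r)
    rw [Real.norm_of_nonneg (by positivity [(a2Profile_pos hc hr).le])]
    exact sq_mul_a2Profile_le hc.le hr

lemma setIntegral_Ioi_sq_mul_a2Profile_pos (hc : 0 < c) :
    0 < ∫ r in Ioi (0 : ℝ), r ^ 2 * a2Profile c r := by
  have hpos : ∀ r ∈ Ioi (0 : ℝ), 0 < r ^ 2 * a2Profile c r := fun r (hr : 0 < r) =>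
    mul_pos (by positivity) (a2Profile_pos hc hr)
  have hsupp : Function.support (fun r : ℝ => r ^ 2 * a2Profile c r) ∩ Ioi 0 = Ioi 0 :=
    inter_eq_right.2 fun r hr => (hpos r hr).ne'
  rw [setIntegral_pos_iff_support_of_nonneg_ae
    (ae_restrict_of_forall_mem measurableSet_Ioi fun r hr => (hpos r hr).le)
    (integrableOn_sq_mul_a2Profile hc), hsupp, Real.volume_Ioi]
  exact ENNReal.zero_lt_top

end Profile

lemma bubble_one_zero (x : E3) :
    bubble 1 0 x = 3 ^ ((1 : ℝ) / 4) * (1 + ‖x‖ ^ 2) ^ (-(1 : ℝ) / 2) := by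
  rw [bubble, sub_zero, one_pow, Real.div_rpow zero_le_one (by positivity), Real.one_rpow, neg_div,
    Real.rpow_neg (by positivity), inv_eq_one_div]

lemma a2_integrand_eq_a2Profile_norm :
    (fun x : E3 => bubble 1 0 x * (‖x‖⁻¹ - ((1 : ℝ) + ‖x‖ ^ 2) ^ (-(1 : ℝ) / 2)) +
        (1 / 2) * (bubble 1 0 x) ^ 5 * ‖x‖) =
      fun x => a2Profile (3 ^ ((1 : ℝ) / 4)) ‖x‖ := by
  ext x
  rw [bubble_one_zero, a2Profile]

/-- the integral
`∫_{ℝ³} [ w_{1,0}(x)(|x|⁻¹ − (1+|x|²)^{−1/2}) + (1/2) w_{1,0}(x)⁵ |x| ] dx`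
is finite and strictly positive, where `w_{1,0}(x) = 3^{1/4}(1+|x|²)^{−1/2}`. -/
theorem a2_integral_finite_pos :
    MeasureTheory.Integrable (fun x : E3 =>
      bubble 1 0 x * (‖x‖⁻¹ - ((1 : ℝ) + ‖x‖ ^ 2) ^ (-(1 : ℝ)/2)) +
        (1 / 2) * (bubble 1 0 x) ^ 5 * ‖x‖) ∧
    0 < ∫ x : E3,
      bubble 1 0 x * (‖x‖⁻¹ - ((1 : ℝ) + ‖x‖ ^ 2) ^ (-(1 : ℝ)/2)) +
        (1 / 2) * (bubble 1 0 x) ^ 5 * ‖x‖ := by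
  rw [a2_integrand_eq_a2Profile_norm]
  set c : ℝ := 3 ^ ((1 : ℝ) / 4)
  have hc : 0 < c := by positivity
  have hint : Integrable (fun x : E3 => a2Profile c ‖x‖) :=
    (integrable_fun_norm_addHaar volume).2 (by simpa using integrableOn_sq_mul_a2Profile hc)
  refine ⟨hint, ?_⟩
  rw [integral_fun_norm_addHaar volume]
  simp only [finrank_euclideanSpace_fin, smul_eq_mul, nsmul_eq_mul]
  have hball : 0 < volume.real (Metric.ball (0 : E3) 1) :=
    ENNReal.toReal_pos (Metric.measure_ball_pos _ _ one_pos).ne' measure_ball_lt_top.ne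
  exact mul_pos (by norm_num) (mul_pos hball (setIntegral_Ioi_sq_mul_a2Profile_pos hc))

end
end
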